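/- Let m ≥ 1, let O ⊆ ℝ^m be an open set, let f : O → ℝ be such that every point x̄ ∈ O admits an open neighbourhood V ⊆ O on which f has a lower-C² representation, and let X be a nonempty compact subset of O. Then there exists an open set O' with X ⊆ O' ⊆ O such that f has a single common lower-C² representation valid on all of O'; that is, there exist a compact topological space T and a family (f_t)_{t∈T} of functions on O' with f = max_{t∈T} f_t on O', and the maps (t,x) ↦ f_t(x), (t,x) ↦ ∇f_t(x), and (t,x) ↦ ∇²f_t(x) continuous on T × O'. -/

import Mathlib

/-
Cover `X` by finitely many balls `B(xᵢ, δᵢ/2)` such that `closedBall xᵢ δᵢ` lies in an open set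
`Vᵢ` carrying a local representation `(fᵢ,ₜ)`, and let `c` be a lower bound of `f` on the union
`O'` of these balls. With a bump `χᵢ` equal to `1` on `closedBall xᵢ (δᵢ/2)` and supported in
`closedBall xᵢ δᵢ`, the functions `c + χᵢ (fᵢ,ₜ - c)`, extended by `c` outside `Vᵢ`, are `C²` on the
whole space with jointly continuous derivatives, lie below `f` on `O'` (as convex combinations of
`fᵢ,ₜ ≤ f` and `c ≤ f`), and attain `f` wherever `χᵢ = 1`. The finite disjoint union of the compact
index spaces indexes the common representation.
-/

open scoped RealInnerProductSpace

/-- `(ft t)_{t ∈ T}` is a lower-C² representation of `f` on the set `V`: each `ft t`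
is C² on `V`, the values, gradients and Hessians depend continuously on
`(t, x) ∈ T × V`, and `f = max_{t ∈ T} ft t` on `V` (the maximum being attained). -/
def IsLowerC2Rep {m : ℕ} (T : Type) [TopologicalSpace T]
    (f : EuclideanSpace ℝ (Fin m) → ℝ)
    (ft : T → EuclideanSpace ℝ (Fin m) → ℝ)
    (V : Set (EuclideanSpace ℝ (Fin m))) : Prop :=
  (∀ t : T, ContDiffOn ℝ 2 (ft t) V) ∧
  ContinuousOn (fun p : T × EuclideanSpace ℝ (Fin m) => ft p.1 p.2)
    (Set.univ ×ˢ V) ∧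
  ContinuousOn (fun p : T × EuclideanSpace ℝ (Fin m) => gradient (ft p.1) p.2)
    (Set.univ ×ˢ V) ∧
  ContinuousOn
    (fun p : T × EuclideanSpace ℝ (Fin m) => fderiv ℝ (gradient (ft p.1)) p.2)
    (Set.univ ×ˢ V) ∧
  (∀ x ∈ V, (∀ t : T, ft t x ≤ f x) ∧ (∃ t : T, ft t x = f x))

open Set Filter Metric InnerProductSpace

theorem continuousOn_sigma_prod {ι : Type*} {T : ι → Type*} [∀ i, TopologicalSpace (T i)]
    {E α : Type*} [TopologicalSpace E] [TopologicalSpace α] {G : (Σ i, T i) × E → α}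
    {s : Set E} (hs : IsOpen s)
    (hG : ∀ i, ContinuousOn (fun q : T i × E => G (⟨i, q.1⟩, q.2)) (univ ×ˢ s)) :
    ContinuousOn G (univ ×ˢ s) := by
  rw [(isOpen_univ.prod hs).continuousOn_iff]
  rintro ⟨⟨i, t⟩, x⟩ ⟨-, hx⟩
  exact (Topology.IsOpenEmbedding.sigmaMk.prodMap Topology.IsOpenEmbedding.id).continuousAt_iff.1
    ((hG i).continuousAt ((isOpen_univ.prod hs).mem_nhds (mk_mem_prod (mem_univ t) hx)))

section C2Families

variable {F : Type*} [NormedAddCommGroup F] [InnerProductSpace ℝ F] [CompleteSpace F]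
  {T : Type*} [TopologicalSpace T] {g h : T → F → ℝ} {U V W : Set F}

theorem HasGradientAt.fun_add {f₁ f₂ : F → ℝ} {f₁' f₂' x : F} (h₁ : HasGradientAt f₁ f₁' x)
    (h₂ : HasGradientAt f₂ f₂' x) : HasGradientAt (fun y => f₁ y + f₂ y) (f₁' + f₂') x := by
  rw [hasGradientAt_iff_hasFDerivAt] at *
  simpa only [map_add] using h₁.fun_add h₂

theorem HasGradientAt.fun_mul {f₁ f₂ : F → ℝ} {f₁' f₂' x : F} (h₁ : HasGradientAt f₁ f₁' x)
    (h₂ : HasGradientAt f₂ f₂' x) :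
    HasGradientAt (fun y => f₁ y * f₂ y) (f₁ x • f₂' + f₂ x • f₁') x := by
  rw [hasGradientAt_iff_hasFDerivAt] at *
  simpa [map_add, map_smulₛₗ] using h₁.fun_mul h₂

theorem ContDiffOn.gradient_of_isOpen {f : F → ℝ} {s : Set F} {k n : WithTop ℕ∞}
    (hf : ContDiffOn ℝ n f s) (hs : IsOpen s) (hkn : k + 1 ≤ n) :
    ContDiffOn ℝ k (gradient f) s :=
  (toDual ℝ F).symm.toContinuousLinearEquiv.toContinuousLinearMap.contDiff.comp_contDiffOn
    (hf.fderiv_of_isOpen hs hkn)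

theorem fderiv_gradient_eq_of_hasGradientAt {f : F → ℝ} {φ : F → F} {φ' : F →L[ℝ] F}
    {s : Set F} {x : F} (hs : IsOpen s) (hx : x ∈ s) (hf : ∀ y ∈ s, HasGradientAt f (φ y) y)
    (hφ : HasFDerivAt φ φ' x) : fderiv ℝ (gradient f) x = φ' :=
  (hφ.congr_of_eventuallyEq
    (eventually_of_mem (hs.mem_nhds hx) fun y hy => (hf y hy).gradient)).fderiv

variable (T) in
structure IsC2FamilyOn (h : T → F → ℝ) (V : Set F) : Prop where
  contDiffOn : ∀ t, ContDiffOn ℝ 2 (h t) V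
  continuousOn : ContinuousOn (fun p : T × F => h p.1 p.2) (univ ×ˢ V)
  continuousOn_gradient : ContinuousOn (fun p : T × F => gradient (h p.1) p.2) (univ ×ˢ V)
  continuousOn_hessian :
    ContinuousOn (fun p : T × F => fderiv ℝ (gradient (h p.1)) p.2) (univ ×ˢ V)

namespace IsC2FamilyOn

theorem hasGradientAt (hh : IsC2FamilyOn T h V) (hV : IsOpen V) (t : T) {x : F} (hx : x ∈ V) :
    HasGradientAt (h t) (gradient (h t) x) x :=
  (((hh.contDiffOn t).differentiableOn two_ne_zero).differentiableAt (hV.mem_nhds hx)).hasGradientAt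

theorem hasFDerivAt_gradient (hh : IsC2FamilyOn T h V) (hV : IsOpen V) (t : T) {x : F}
    (hx : x ∈ V) : HasFDerivAt (gradient (h t)) (fderiv ℝ (gradient (h t)) x) x :=
  ((((hh.contDiffOn t).gradient_of_isOpen hV le_rfl).differentiableOn one_ne_zero).differentiableAt
    (hV.mem_nhds hx)).hasFDerivAt

theorem mono (hh : IsC2FamilyOn T h V) (hUV : U ⊆ V) : IsC2FamilyOn T h U where
  contDiffOn t := (hh.contDiffOn t).mono hUV
  continuousOn := hh.continuousOn.mono (prod_mono subset_rfl hUV)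
  continuousOn_gradient := hh.continuousOn_gradient.mono (prod_mono subset_rfl hUV)
  continuousOn_hessian := hh.continuousOn_hessian.mono (prod_mono subset_rfl hUV)

theorem congr (hV : IsOpen V) (hg : IsC2FamilyOn T g V) (hgh : ∀ t, EqOn (h t) (g t) V) :
    IsC2FamilyOn T h V := by
  have hev : ∀ t, ∀ x ∈ V, h t =ᶠ[nhds x] g t := fun t x hx =>
    eventuallyEq_of_mem (hV.mem_nhds hx) (hgh t)
  exact
    { contDiffOn := fun t => (hg.contDiffOn t).congr (hgh t)
      continuousOn := hg.continuousOn.congr fun p hp => hgh p.1 hp.2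
      continuousOn_gradient := hg.continuousOn_gradient.congr fun p hp =>
        (hev p.1 p.2 hp.2).gradient_eq
      continuousOn_hessian := hg.continuousOn_hessian.congr fun p hp =>
        (hev p.1 p.2 hp.2).gradient.fderiv_eq }

theorem union (hU : IsOpen U) (hW : IsOpen W) (hhU : IsC2FamilyOn T h U)
    (hhW : IsC2FamilyOn T h W) : IsC2FamilyOn T h (U ∪ W) := by
  have hU' : IsOpen (univ ×ˢ U : Set (T × F)) := isOpen_univ.prod hU
  have hW' : IsOpen (univ ×ˢ W : Set (T × F)) := isOpen_univ.prod hW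
  refine ⟨fun t => ?_, ?_, ?_, ?_⟩
  · refine contDiffOn_of_locally_contDiffOn fun x hx => hx.elim (fun hx => ?_) fun hx => ?_
    · exact ⟨U, hU, hx, (hhU.contDiffOn t).mono inter_subset_right⟩
    · exact ⟨W, hW, hx, (hhW.contDiffOn t).mono inter_subset_right⟩
  all_goals rw [prod_union]
  · exact hhU.continuousOn.union_of_isOpen hhW.continuousOn hU' hW'
  · exact hhU.continuousOn_gradient.union_of_isOpen hhW.continuousOn_gradient hU' hW'
  · exact hhU.continuousOn_hessian.union_of_isOpen hhW.continuousOn_hessian hU' hW'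

theorem add (hV : IsOpen V) (hg : IsC2FamilyOn T g V) (hh : IsC2FamilyOn T h V) :
    IsC2FamilyOn T (fun t y => g t y + h t y) V := by
  have hgrad : ∀ t, ∀ y ∈ V, HasGradientAt (fun y => g t y + h t y)
      (gradient (g t) y + gradient (h t) y) y := fun t y hy =>
    (hg.hasGradientAt hV t hy).fun_add (hh.hasGradientAt hV t hy)
  exact
    { contDiffOn := fun t => (hg.contDiffOn t).add (hh.contDiffOn t)
      continuousOn := hg.continuousOn.add hh.continuousOn
      continuousOn_gradient := (hg.continuousOn_gradient.add hh.continuousOn_gradient).congr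
        fun p hp => (hgrad p.1 p.2 hp.2).gradient
      continuousOn_hessian := (hg.continuousOn_hessian.add hh.continuousOn_hessian).congr
        fun p hp => fderiv_gradient_eq_of_hasGradientAt hV hp.2 (hgrad p.1)
          ((hg.hasFDerivAt_gradient hV p.1 hp.2).add (hh.hasFDerivAt_gradient hV p.1 hp.2)) }

theorem mul (hV : IsOpen V) (hg : IsC2FamilyOn T g V) (hh : IsC2FamilyOn T h V) :
    IsC2FamilyOn T (fun t y => g t y * h t y) V := by
  have hgrad : ∀ t, ∀ y ∈ V, HasGradientAt (fun y => g t y * h t y)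
      (g t y • gradient (h t) y + h t y • gradient (g t) y) y := fun t y hy =>
    (hg.hasGradientAt hV t hy).fun_mul (hh.hasGradientAt hV t hy)
  have hsmulRight : ∀ {a b : T × F → F}, ContinuousOn a (univ ×ˢ V) →
      ContinuousOn b (univ ×ˢ V) →
        ContinuousOn (fun p => (toDual ℝ F (a p)).smulRight (b p)) (univ ×ˢ V) :=
    fun ha hb => isBoundedBilinearMap_smulRight.continuous.comp_continuousOn
      (((toDual ℝ F).continuous.comp_continuousOn ha).prodMk hb)
  refine
    { contDiffOn := fun t => (hg.contDiffOn t).mul (hh.contDiffOn t)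
      continuousOn := hg.continuousOn.mul hh.continuousOn
      continuousOn_gradient := ((hg.continuousOn.smul hh.continuousOn_gradient).add
        (hh.continuousOn.smul hg.continuousOn_gradient)).congr
          fun p hp => (hgrad p.1 p.2 hp.2).gradient
      continuousOn_hessian := (((hg.continuousOn.smul hh.continuousOn_hessian).add
        (hsmulRight hg.continuousOn_gradient hh.continuousOn_gradient)).add
        ((hh.continuousOn.smul hg.continuousOn_hessian).add
          (hsmulRight hh.continuousOn_gradient hg.continuousOn_gradient))).congr
        fun p hp => fderiv_gradient_eq_of_hasGradientAt hV hp.2 (hgrad p.1) ?_ }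
  exact ((hg.hasGradientAt hV p.1 hp.2).hasFDerivAt.smul (hh.hasFDerivAt_gradient hV p.1 hp.2)).add
    ((hh.hasGradientAt hV p.1 hp.2).hasFDerivAt.smul (hg.hasFDerivAt_gradient hV p.1 hp.2))

end IsC2FamilyOn

theorem ContDiffOn.isC2FamilyOn {f : F → ℝ} (hV : IsOpen V) (hf : ContDiffOn ℝ 2 f V) :
    IsC2FamilyOn T (fun _ => f) V where
  contDiffOn _ := hf
  continuousOn := hf.continuousOn.comp continuousOn_snd fun _ hp => hp.2
  continuousOn_gradient := (hf.gradient_of_isOpen hV one_add_one_eq_two.le).continuousOn.comp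
    continuousOn_snd fun _ hp => hp.2
  continuousOn_hessian :=
    ((hf.gradient_of_isOpen hV one_add_one_eq_two.le).continuousOn_fderiv_of_isOpen hV le_rfl).comp
      continuousOn_snd fun _ hp => hp.2

theorem IsC2FamilyOn.sigma {ι : Type*} {S : ι → Type*} [∀ i, TopologicalSpace (S i)]
    {g : ∀ i, S i → F → ℝ} (hV : IsOpen V) (hg : ∀ i, IsC2FamilyOn (S i) (g i) V) :
    IsC2FamilyOn (Σ i, S i) (fun p => g p.1 p.2) V where
  contDiffOn p := (hg p.1).contDiffOn p.2
  continuousOn := continuousOn_sigma_prod hV fun i => (hg i).continuousOn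
  continuousOn_gradient := continuousOn_sigma_prod hV fun i => (hg i).continuousOn_gradient
  continuousOn_hessian := continuousOn_sigma_prod hV fun i => (hg i).continuousOn_hessian

theorem IsC2FamilyOn.cutoff (hV : IsOpen V) (hh : IsC2FamilyOn T h V) {χ : F → ℝ}
    (hχ : ContDiff ℝ 2 χ) (hsupp : tsupport χ ⊆ V) (c : ℝ) :
    IsC2FamilyOn T (fun t x => c + χ x * V.indicator (fun y => h t y - c) x) univ := by
  have hout : IsOpen (tsupport χ)ᶜ := (isClosed_tsupport χ).isOpen_compl
  have hcover : V ∪ (tsupport χ)ᶜ = univ :=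
    eq_univ_of_forall fun x => (em (x ∈ tsupport χ)).imp (@hsupp x) id
  have hconst : ∀ {W : Set F}, IsOpen W → ∀ a : ℝ, IsC2FamilyOn T (fun _ _ => a) W :=
    fun hW a => contDiffOn_const.isC2FamilyOn hW
  set g : T → F → ℝ := fun t x => c + χ x * V.indicator (fun y => h t y - c) x
  have honV : IsC2FamilyOn T g V :=
    ((hconst hV c).add hV ((hχ.contDiffOn.isC2FamilyOn hV).mul hV
      (hh.add hV (hconst hV (-c))))).congr hV fun t x hx => by
        simp only [g, indicator_of_mem hx, sub_eq_add_neg]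
  have hoff : IsC2FamilyOn T g (tsupport χ)ᶜ :=
    (hconst hout c).congr hout fun t x hx => by
      simp only [g, image_eq_zero_of_notMem_tsupport hx, zero_mul, add_zero]
  simpa only [hcover] using honV.union hV hout hoff

theorem IsC2FamilyOn.exists_extension {f : F → ℝ} (hV : IsOpen V) (hh : IsC2FamilyOn T h V)
    (hle : ∀ y ∈ V, ∀ t, h t y ≤ f y) (hattain : ∀ y ∈ V, ∃ t, h t y = f y) {x : F} {r R : ℝ}
    (hr : 0 < r) (hrR : r < R) (hRV : closedBall x R ⊆ V) (c : ℝ) :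
    ∃ g : T → F → ℝ, IsC2FamilyOn T g univ ∧ (∀ y, c ≤ f y → ∀ t, g t y ≤ f y) ∧
      ∀ y ∈ closedBall x r, ∃ t, g t y = f y := by
  let χ : ContDiffBump x := ⟨r, R, hr, hrR⟩
  refine ⟨fun t y => c + χ y * V.indicator (fun y => h t y - c) y,
    hh.cutoff hV χ.contDiff (χ.tsupport_eq.trans_subset hRV) c, fun y hcy t => ?_, fun y hy => ?_⟩
  · dsimp only
    by_cases hyV : y ∈ V
    · rw [indicator_of_mem hyV]
      nlinarith [χ.nonneg (x := y), χ.le_one (x := y), hle y hyV t]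
    · rw [indicator_of_notMem hyV, mul_zero, add_zero]
      exact hcy
  · have hyV : y ∈ V := hRV (closedBall_subset_closedBall hrR.le hy)
    obtain ⟨t, ht⟩ := hattain y hyV
    refine ⟨t, ?_⟩
    dsimp only
    rw [indicator_of_mem hyV, χ.one_of_mem_closedBall hy, one_mul, ht, add_sub_cancel]

end C2Families

section LowerC2Rep

variable {m : ℕ} {f : EuclideanSpace ℝ (Fin m) → ℝ} {V : Set (EuclideanSpace ℝ (Fin m))}

theorem isLowerC2Rep_iff {T : Type} [TopologicalSpace T] {ft : T → EuclideanSpace ℝ (Fin m) → ℝ} :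
    IsLowerC2Rep T f ft V ↔
      IsC2FamilyOn T ft V ∧ ∀ x ∈ V, (∀ t, ft t x ≤ f x) ∧ ∃ t, ft t x = f x :=
  ⟨fun ⟨h₁, h₂, h₃, h₄, h₅⟩ => ⟨⟨h₁, h₂, h₃, h₄⟩, h₅⟩,
    fun ⟨⟨h₁, h₂, h₃, h₄⟩, h₅⟩ => ⟨h₁, h₂, h₃, h₄, h₅⟩⟩

theorem IsLowerC2Rep.bddBelow_image {T : Type} [TopologicalSpace T]
    {ft : T → EuclideanSpace ℝ (Fin m) → ℝ} (hrep : IsLowerC2Rep T f ft V)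
    {K : Set (EuclideanSpace ℝ (Fin m))} (hK : IsCompact K) (hKV : K ⊆ V) :
    BddBelow (f '' K) := by
  obtain ⟨hC2, -, -, -, hmax⟩ := hrep
  rcases K.eq_empty_or_nonempty with rfl | ⟨x, hx⟩
  · simp
  obtain ⟨t, -⟩ := (hmax x (hKV hx)).2
  obtain ⟨b, hb⟩ := hK.bddBelow_image ((hC2 t).continuousOn.mono hKV)
  exact ⟨b, forall_mem_image.2 fun y hy =>
    (hb (mem_image_of_mem _ hy)).trans ((hmax y (hKV hy)).1 t)⟩

theorem isLowerC2Rep_sigma {ι : Type} {T : ι → Type} [∀ i, TopologicalSpace (T i)]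
    {g : ∀ i, T i → EuclideanSpace ℝ (Fin m) → ℝ} (hg : ∀ i, IsC2FamilyOn (T i) (g i) univ)
    (hle : ∀ x ∈ V, ∀ i t, g i t x ≤ f x) (hattain : ∀ x ∈ V, ∃ i t, g i t x = f x) :
    IsLowerC2Rep (Σ i, T i) f (fun p => g p.1 p.2) V :=
  isLowerC2Rep_iff.2 ⟨(IsC2FamilyOn.sigma isOpen_univ hg).mono (subset_univ V),
    fun x hx => ⟨fun p => hle x hx p.1 p.2,
      let ⟨i, t, hit⟩ := hattain x hx; ⟨⟨i, t⟩, hit⟩⟩⟩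

end LowerC2Rep

theorem common_lowerC2_representation_general {m : ℕ}
    (O : Set (EuclideanSpace ℝ (Fin m)))
    (f : EuclideanSpace ℝ (Fin m) → ℝ)
    (hloc : ∀ xbar ∈ O, ∃ V : Set (EuclideanSpace ℝ (Fin m)),
      IsOpen V ∧ xbar ∈ V ∧ V ⊆ O ∧
      ∃ (T : Type) (instT : TopologicalSpace T),
        @CompactSpace T instT ∧
        ∃ ft : T → EuclideanSpace ℝ (Fin m) → ℝ,
          @IsLowerC2Rep m T instT f ft V)
    (X : Set (EuclideanSpace ℝ (Fin m))) (hXcpt : IsCompact X)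
    (hXO : X ⊆ O) :
    ∃ O' : Set (EuclideanSpace ℝ (Fin m)),
      IsOpen O' ∧ X ⊆ O' ∧ O' ⊆ O ∧
      ∃ (T : Type) (instT : TopologicalSpace T),
        @CompactSpace T instT ∧
        ∃ ft : T → EuclideanSpace ℝ (Fin m) → ℝ,
          @IsLowerC2Rep m T instT f ft O' := by
  choose V hV hxV hVO T instT hT ft hrep using fun x : X => hloc x (hXO x.2)
  choose δ hδ hδV using fun x : X => nhds_basis_closedBall.mem_iff.1 ((hV x).mem_nhds (hxV x))
  obtain ⟨s, hXs⟩ := hXcpt.elim_finite_subcover (fun x : X => ball x.1 (δ x / 2))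
    (fun _ => isOpen_ball) fun y hy => mem_iUnion.2 ⟨⟨y, hy⟩, mem_ball_self (half_pos (hδ _))⟩
  have hball : ∀ i : X, ball i.1 (δ i / 2) ⊆ closedBall i.1 (δ i) :=
    fun i => ball_subset_closedBall.trans (closedBall_subset_closedBall (half_le_self (hδ i).le))
  set O' := ⋃ i ∈ s, ball i.1 (δ i / 2)
  obtain ⟨c, hc⟩ : BddBelow (f '' O') := by
    refine (s.finite_toSet.bddBelow_biUnion.2 fun i _ =>
      (hrep i).bddBelow_image (isCompact_closedBall _ _) (hδV i)).mono ?_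
    rw [image_iUnion₂]
    exact iUnion₂_mono fun i _ => image_mono (hball i)
  have hrep' := fun i => isLowerC2Rep_iff.1 (hrep i)
  choose g hg hgle hgeq using fun i : X => (hrep' i).1.exists_extension (hV i)
    (fun y hy => ((hrep' i).2 y hy).1) (fun y hy => ((hrep' i).2 y hy).2)
    (half_pos (hδ i)) (half_lt_self (hδ i)) (hδV i) c
  refine ⟨O', isOpen_biUnion fun _ _ => isOpen_ball, hXs,
    iUnion₂_subset fun i _ => (hball i).trans ((hδV i).trans (hVO i)),
    Σ i : s, T i, inferInstance, inferInstance, _,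
    isLowerC2Rep_sigma (fun i => hg i) (fun x hx i t => hgle i x (hc (mem_image_of_mem f hx)) t)
      fun x hx => ?_⟩
  obtain ⟨i, hi, hxi⟩ := mem_iUnion₂.1 hx
  obtain ⟨t, ht⟩ := hgeq i x (ball_subset_closedBall hxi)
  exact ⟨⟨i, hi⟩, t, ht⟩

theorem common_lowerC2_representation {m : ℕ} (hm : 1 ≤ m)
    (O : Set (EuclideanSpace ℝ (Fin m))) (hOopen : IsOpen O)
    (f : EuclideanSpace ℝ (Fin m) → ℝ)
    (hloc : ∀ xbar ∈ O, ∃ V : Set (EuclideanSpace ℝ (Fin m)),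
      IsOpen V ∧ xbar ∈ V ∧ V ⊆ O ∧
      ∃ (T : Type) (instT : TopologicalSpace T),
        @CompactSpace T instT ∧
        ∃ ft : T → EuclideanSpace ℝ (Fin m) → ℝ,
          @IsLowerC2Rep m T instT f ft V)
    (X : Set (EuclideanSpace ℝ (Fin m))) (hXne : X.Nonempty) (hXcpt : IsCompact X)
    (hXO : X ⊆ O) :
    ∃ O' : Set (EuclideanSpace ℝ (Fin m)),
      IsOpen O' ∧ X ⊆ O' ∧ O' ⊆ O ∧
      ∃ (T : Type) (instT : TopologicalSpace T),
        @CompactSpace T instT ∧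
        ∃ ft : T → EuclideanSpace ℝ (Fin m) → ℝ,
          @IsLowerC2Rep m T instT f ft O' :=
  common_lowerC2_representation_general O f hloc X hXcpt hXO
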